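/- Let U₁,…,Uₙ be i.i.d. uniform on {0,1,…,N} with N = n·r, r ≥ 1, and let q > 2, p > 1 with 1/p + 1/q = 1. Then ∑_{u∈S} ∏ᵢ (max{uᵢ, 1/(2π)})^{−1/2} ≤ exp{(n/p)·Ψ(r)} · [(2π)^{q/2} + ζ(q/2)]^{n/q}, where S = {u ∈ {0,…,N}ⁿ : ∑ᵢ uᵢ = N} and Ψ(t) = (1+t)log(1+t) − t·log t. -/

import Mathlib

open Real

/-- `Ψ(t) = (1+t)log(1+t) − t·log t`. -/
noncomputable def Psi (t : ℝ) : ℝ := (1 + t) * Real.log (1 + t) - t * Real.log t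

/-- Riemann's zeta function for real arguments, `ζ(s) = ∑_{j=1}^∞ j^{-s}`. -/
noncomputable def zetaReal (s : ℝ) : ℝ := ∑' j : ℕ, ((j : ℝ) + 1) ^ (-s)

/-!
By Hölder's inequality on the finite set `S` of compositions of `N` into `n` parts,
`∑_S F ≤ #S ^ (1/p) * (∑_S F ^ q) ^ (1/q)`. The generating-function (Chernoff) bound
`#S * x ^ N ≤ (∑_{j ≤ N} x ^ j) ^ n ≤ (1 - x)⁻ⁿ` at `x = r / (1 + r)` gives `#S ≤ exp (n Ψ(r))`.
Since `F ^ q` is a product of one-variable factors, dropping the constraint `∑ uᵢ = N` bounds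
`∑_S F ^ q` by the `n`-th power of `∑_{j ≤ N} max(j, 1/(2π)) ^ (-q/2) ≤ (2π) ^ (q/2) + ζ(q/2)`.
-/

open Finset Finset.Nat

theorem Finset.Nat.antidiagonalTuple_subset_piFinset (n N : ℕ) :
    antidiagonalTuple n N ⊆ Fintype.piFinset fun _ : Fin n => range (N + 1) := by
  intro u hu
  rw [mem_antidiagonalTuple] at hu
  simp only [Fintype.mem_piFinset, mem_range, Nat.lt_succ_iff]
  exact fun i => hu ▸ single_le_sum (fun j _ => Nat.zero_le _) (mem_univ i)

section OrderedSemiring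

variable {R : Type*} [CommSemiring R] [PartialOrder R] [IsOrderedRing R]

theorem sum_antidiagonalTuple_prod_le (n N : ℕ) {g : ℕ → R} (hg : ∀ j, 0 ≤ g j) :
    ∑ u ∈ antidiagonalTuple n N, ∏ i, g (u i) ≤ (∑ j ∈ range (N + 1), g j) ^ n :=
  calc ∑ u ∈ antidiagonalTuple n N, ∏ i, g (u i)
      ≤ ∑ u ∈ Fintype.piFinset (fun _ : Fin n => range (N + 1)), ∏ i, g (u i) :=
        sum_le_sum_of_subset_of_nonneg (antidiagonalTuple_subset_piFinset n N)
          fun _ _ _ => prod_nonneg fun _ _ => hg _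
    _ = (∑ j ∈ range (N + 1), g j) ^ n := by
        rw [← prod_univ_sum, prod_const, card_univ, Fintype.card_fin]

theorem card_antidiagonalTuple_mul_pow_le (n N : ℕ) {x : R} (hx : 0 ≤ x) :
    #(antidiagonalTuple n N) * x ^ N ≤ (∑ j ∈ range (N + 1), x ^ j) ^ n :=
  calc (#(antidiagonalTuple n N) : R) * x ^ N = ∑ u ∈ antidiagonalTuple n N, ∏ i, x ^ u i := by
        rw [← nsmul_eq_mul, ← sum_const]
        exact sum_congr rfl fun u hu => by rw [prod_pow_eq_pow_sum, mem_antidiagonalTuple.mp hu]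
    _ ≤ (∑ j ∈ range (N + 1), x ^ j) ^ n :=
        sum_antidiagonalTuple_prod_le n N fun j => pow_nonneg hx j

end OrderedSemiring

theorem card_antidiagonalTuple_le {r : ℝ} (hr : 0 < r) (n N : ℕ) :
    (#(antidiagonalTuple n N) : ℝ) ≤ (1 + r) ^ n * ((1 + r) / r) ^ N := by
  set x := r / (1 + r) with hx_def
  have hx : 0 < x := by positivity
  have hgeom : ∑ j ∈ range (N + 1), x ^ j ≤ 1 + r := by
    have h1x : 1 / (1 - x) = 1 + r := by rw [hx_def]; field_simp; ring
    rw [range_eq_Ico, ← h1x, ← pow_zero x]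
    exact geom_sum_Ico_le_of_lt_one hx.le (by rw [div_lt_one (by positivity)]; linarith)
  have hcard : (#(antidiagonalTuple n N) : ℝ) * x ^ N ≤ (1 + r) ^ n :=
    (card_antidiagonalTuple_mul_pow_le n N hx.le).trans
      (pow_le_pow_left₀ (sum_nonneg fun j _ => pow_nonneg hx.le j) hgeom n)
  rwa [← le_div_iff₀ (pow_pos hx N), div_eq_mul_inv, ← inv_pow, inv_div] at hcard

theorem exp_mul_Psi {r : ℝ} (hr : 0 < r) {n N : ℕ} (hN : (N : ℝ) = n * r) :
    exp (n * Psi r) = (1 + r) ^ n * ((1 + r) / r) ^ N := by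
  have h1r : 0 < 1 + r := by linarith
  have hlog : n * Psi r = n * log (1 + r) + N * log ((1 + r) / r) := by
    rw [Psi, log_div h1r.ne' hr.ne', hN]; ring
  rw [hlog, exp_add, exp_nat_mul, exp_nat_mul, exp_log h1r, exp_log (by positivity)]

theorem zetaReal_nonneg (s : ℝ) : 0 ≤ zetaReal s :=
  tsum_nonneg fun _ => by positivity

theorem summable_nat_add_one_rpow_neg {s : ℝ} (hs : 1 < s) :
    Summable fun j : ℕ => ((j : ℝ) + 1) ^ (-s) := by
  have h := (summable_nat_add_iff 1).mpr (Real.summable_nat_rpow.mpr (neg_lt_neg hs))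
  exact_mod_cast h

theorem sum_range_max_rpow_neg_le {c s : ℝ} (hc0 : 0 ≤ c) (hc1 : c ≤ 1) (hs : 1 < s) (N : ℕ) :
    ∑ j ∈ range (N + 1), max (j : ℝ) c ^ (-s) ≤ c ^ (-s) + zetaReal s := by
  have htail : ∑ j ∈ range N, max ((j + 1 : ℕ) : ℝ) c ^ (-s) ≤ zetaReal s := by
    have hmax : ∀ j : ℕ, max ((j + 1 : ℕ) : ℝ) c = j + 1 := fun j => by
      push_cast
      exact max_eq_left (by linarith [(j.cast_nonneg : (0 : ℝ) ≤ j)])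
    simp only [hmax]
    exact (summable_nat_add_one_rpow_neg hs).sum_le_tsum _ fun j _ => by positivity
  rw [sum_range_succ', Nat.cast_zero, max_eq_right hc0]
  linarith

theorem sum_antidiagonalTuple_prod_max_rpow_neg_le {c s : ℝ} (hc0 : 0 ≤ c) (hc1 : c ≤ 1)
    (hs : 1 < s) (n N : ℕ) :
    ∑ u ∈ antidiagonalTuple n N, ∏ i, max (u i : ℝ) c ^ (-s) ≤ (c ^ (-s) + zetaReal s) ^ n :=
  (sum_antidiagonalTuple_prod_le n N fun _ => by positivity).trans
    (pow_le_pow_left₀ (sum_nonneg fun _ _ => by positivity)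
      (sum_range_max_rpow_neg_le hc0 hc1 hs N) n)

theorem sum_antidiagonalTuple_prod_max_rpow_neg_half_rpow_le {c q : ℝ} (hc0 : 0 ≤ c)
    (hc1 : c ≤ 1) (hq : 2 < q) (n N : ℕ) :
    ∑ u ∈ antidiagonalTuple n N, (∏ i, max (u i : ℝ) c ^ (-(1 : ℝ) / 2)) ^ q
      ≤ (c ^ (-(q / 2)) + zetaReal (q / 2)) ^ n := by
  have hprod : ∀ u : Fin n → ℕ, (∏ i, max (u i : ℝ) c ^ (-(1 : ℝ) / 2)) ^ q
      = ∏ i, max (u i : ℝ) c ^ (-(q / 2)) := fun u => by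
    rw [← finsetProd_rpow _ _ fun _ _ => by positivity]
    refine prod_congr rfl fun _ _ => ?_
    rw [← rpow_mul (by positivity)]
    ring_nf
  simp only [hprod]
  exact sum_antidiagonalTuple_prod_max_rpow_neg_le hc0 hc1 (by linarith) n N

theorem card_antidiagonalTuple_le_exp_Psi {r : ℝ} (hr : 0 < r) {n N : ℕ}
    (hN : (N : ℝ) = n * r) : (#(antidiagonalTuple n N) : ℝ) ≤ exp (n * Psi r) :=
  exp_mul_Psi hr hN ▸ card_antidiagonalTuple_le hr n N

theorem Real.sum_le_card_rpow_mul_sum_rpow {ι : Type*} (s : Finset ι) {f : ι → ℝ}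
    (hf : ∀ i ∈ s, 0 ≤ f i) {p q : ℝ} (hpq : p.HolderConjugate q) :
    ∑ i ∈ s, f i ≤ (#s : ℝ) ^ (1 / p) * (∑ i ∈ s, f i ^ q) ^ (1 / q) := by
  simpa using inner_le_Lp_mul_Lq_of_nonneg s hpq (fun _ _ => zero_le_one) hf

theorem stmt_15 (n N : ℕ) (r : ℝ) (hr : 1 ≤ r) (hN : (N : ℝ) = n * r)
    (p q : ℝ) (hq : 2 < q) (hp : 1 < p) (hpq : 1/p + 1/q = 1) :
    ∑ u ∈ Finset.Nat.antidiagonalTuple n N,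
        ∏ i, (max (u i : ℝ) (1 / (2 * π))) ^ (-(1:ℝ)/2)
      ≤ Real.exp ((n / p) * Psi r) * ((2 * π) ^ (q/2) + zetaReal (q/2)) ^ ((n : ℝ)/q) := by
  set c : ℝ := 1 / (2 * π) with hc_def
  have hc0 : 0 < c := by positivity
  have hc1 : c ≤ 1 := by rw [div_le_one (by positivity)]; linarith [pi_gt_three]
  have hc : c ^ (-(q / 2)) = (2 * π) ^ (q / 2) := by
    rw [hc_def, one_div, inv_rpow (by positivity), rpow_neg (by positivity), inv_inv]
  have hholder : p.HolderConjugate q :=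
    holderConjugate_iff.mpr ⟨hp, by simpa only [one_div] using hpq⟩
  have hcard : (#(antidiagonalTuple n N) : ℝ) ^ (1 / p) ≤ exp (n / p * Psi r) := by
    rw [show n / p * Psi r = n * Psi r * (1 / p) by ring, exp_mul]
    exact rpow_le_rpow (Nat.cast_nonneg _)
      (card_antidiagonalTuple_le_exp_Psi (by linarith) hN) (by positivity)
  have hmoment :
      (∑ u ∈ antidiagonalTuple n N, (∏ i, max (u i : ℝ) c ^ (-(1 : ℝ) / 2)) ^ q) ^ (1 / q)
        ≤ ((2 * π) ^ (q / 2) + zetaReal (q / 2)) ^ ((n : ℝ) / q) := by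
    have hZ : 0 ≤ (2 * π) ^ (q / 2) + zetaReal (q / 2) :=
      add_nonneg (by positivity) (zetaReal_nonneg _)
    rw [div_eq_mul_one_div (n : ℝ), rpow_mul hZ, rpow_natCast, ← hc]
    exact rpow_le_rpow (sum_nonneg fun _ _ => by positivity)
      (sum_antidiagonalTuple_prod_max_rpow_neg_half_rpow_le hc0.le hc1 hq n N) (by positivity)
  calc _ ≤ _ := sum_le_card_rpow_mul_sum_rpow _ (fun _ _ => by positivity) hholder
    _ ≤ _ := mul_le_mul hcard hmoment (by positivity) (exp_pos _).le
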